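/- arXiv:2508.05926 — 4 statements merged into one kernel-verified Lean document; each statement's English description precedes it below -/
import Mathlib

section
/- Let d be a positive natural number and let σ₁, σ₂ be real numbers with 0 < σ₁ < σ₂. Then for all vectors μ₁, μ₂, x ∈ ℝ^d, the difference of Gaussian log-densities satisfies log N(x; μ₁, σ₁²I) − log N(x; μ₂, σ₂²I) ≤ d·log(σ₂/σ₁) + ‖μ₁ − μ₂‖²/(2σ₂²) + σ₂⁻⁴·‖μ₁ − μ₂‖²/(2(σ₁⁻² − σ₂⁻²)). In particular, the log-ratio of a Gaussian density with the smaller variance over a Gaussian density with the larger variance is bounded above uniformly in x by a constant depending only on d, σ₁, σ₂ and ‖μ₁ − μ₂‖. -/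
open Real MeasureTheory

/-- The isotropic Gaussian density on `ℝ^d` with mean `m` and covariance `v • I`
(`v` is the variance, i.e. `v = σ²`):
`N(x; m, v I) = (2 π v)^(-d/2) · exp(-‖x - m‖² / (2 v))`. -/
noncomputable def gaussDensity (d : ℕ) (v : ℝ) (m x : EuclideanSpace ℝ (Fin d)) : ℝ :=
  (2 * Real.pi * v) ^ (-(d : ℝ) / 2) * Real.exp (-‖x - m‖ ^ 2 / (2 * v))

lemma gauss_aux (a b s t X : ℝ) (ha : 0 ≤ a) (hb : 0 ≤ b) (ht : 0 < t) (hst : t < s)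
    (hX : X ≤ (a + b) ^ 2) :
    X * t / 2 - a ^ 2 * s / 2 ≤ b ^ 2 * t / 2 + t ^ 2 * b ^ 2 / (2 * (s - t)) := by
  have h : a * b * t - (s - t) * a ^ 2 / 2 ≤ t ^ 2 * b ^ 2 / (2 * (s - t)) := by
    rw [le_div_iff₀ (by linarith : (0:ℝ) < 2 * (s - t))]
    nlinarith [sq_nonneg (b * t - (s - t) * a)]
  nlinarith [mul_le_mul_of_nonneg_right hX ht.le]

/-- The log-ratio of a Gaussian density with smaller variance `σ₁²` over one with larger
variance `σ₂²` is bounded above, uniformly in `x`, by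
`d·log(σ₂/σ₁) + ‖μ₁ − μ₂‖²/(2σ₂²) + σ₂⁻⁴·‖μ₁ − μ₂‖²/(2(σ₁⁻² − σ₂⁻²))`. -/
theorem gaussian_log_ratio_bound (d : ℕ) (hd : 0 < d) (σ₁ σ₂ : ℝ)
    (hσ₁ : 0 < σ₁) (hσ₁₂ : σ₁ < σ₂) (μ₁ μ₂ x : EuclideanSpace ℝ (Fin d)) :
    Real.log (gaussDensity d (σ₁ ^ 2) μ₁ x) - Real.log (gaussDensity d (σ₂ ^ 2) μ₂ x) ≤
      d * Real.log (σ₂ / σ₁) + ‖μ₁ - μ₂‖ ^ 2 / (2 * σ₂ ^ 2) +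
        (σ₂ ^ 4)⁻¹ * ‖μ₁ - μ₂‖ ^ 2 / (2 * ((σ₁ ^ 2)⁻¹ - (σ₂ ^ 2)⁻¹)) := by
  have hσ₂ : 0 < σ₂ := hσ₁.trans hσ₁₂
  have hl : ∀ (σ : ℝ), 0 < σ → ∀ m : EuclideanSpace ℝ (Fin d),
      Real.log (gaussDensity d (σ ^ 2) m x)
        = (-(d : ℝ) / 2) * Real.log (2 * Real.pi * σ ^ 2) - ‖x - m‖ ^ 2 / (2 * σ ^ 2) := by
    intro σ hσ m
    unfold gaussDensity
    rw [Real.log_mul (by positivity) (Real.exp_ne_zero _), Real.log_rpow (by positivity),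
      Real.log_exp]
    ring
  rw [hl σ₁ hσ₁ μ₁, hl σ₂ hσ₂ μ₂]
  have hlog : (d : ℝ) / 2 * (Real.log (2 * Real.pi * σ₂ ^ 2)
      - Real.log (2 * Real.pi * σ₁ ^ 2)) = d * Real.log (σ₂ / σ₁) := by
    have h1 : Real.log (2 * Real.pi * σ₂ ^ 2) - Real.log (2 * Real.pi * σ₁ ^ 2)
        = Real.log ((σ₂ / σ₁) ^ 2) := by
      rw [← Real.log_div (by positivity) (by positivity)]
      congr 1
      field_simp
    rw [h1, Real.log_pow]
    push_cast
    ring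
  set a := ‖x - μ₁‖ with ha_def
  set b := ‖μ₁ - μ₂‖ with hb_def
  have ha : 0 ≤ a := norm_nonneg _
  have hb : 0 ≤ b := norm_nonneg _
  have htri : ‖x - μ₂‖ ≤ a + b := by
    calc ‖x - μ₂‖ = ‖(x - μ₁) + (μ₁ - μ₂)‖ := by congr 1; abel
    _ ≤ a + b := norm_add_le _ _
  have hX : ‖x - μ₂‖ ^ 2 ≤ (a + b) ^ 2 := by
    have := pow_le_pow_left₀ (norm_nonneg (x - μ₂)) htri 2
    linarith
  have hst : (σ₂ ^ 2)⁻¹ < (σ₁ ^ 2)⁻¹ := by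
    apply inv_strictAnti₀ (by positivity)
    nlinarith
  have key := gauss_aux a b ((σ₁ ^ 2)⁻¹) ((σ₂ ^ 2)⁻¹) (‖x - μ₂‖ ^ 2) ha hb
    (by positivity) hst hX
  have e1 : a ^ 2 / (2 * σ₁ ^ 2) = a ^ 2 * (σ₁ ^ 2)⁻¹ / 2 := by ring
  have e2 : ‖x - μ₂‖ ^ 2 / (2 * σ₂ ^ 2) = ‖x - μ₂‖ ^ 2 * (σ₂ ^ 2)⁻¹ / 2 := by ring
  have e3 : b ^ 2 / (2 * σ₂ ^ 2) = b ^ 2 * (σ₂ ^ 2)⁻¹ / 2 := by ring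
  have e4 : (σ₂ ^ 4)⁻¹ * b ^ 2 / (2 * ((σ₁ ^ 2)⁻¹ - (σ₂ ^ 2)⁻¹))
      = ((σ₂ ^ 2)⁻¹) ^ 2 * b ^ 2 / (2 * ((σ₁ ^ 2)⁻¹ - (σ₂ ^ 2)⁻¹)) := by
    congr 1
    ring
  rw [e2, e3, e4]
  rw [e1] at *
  linarith [hlog, key]
end

section
/- Let d be a positive natural number, δ > 0, and let g_t, g_{t+1}, f_t, f_{t+1}, R, S be real numbers with 0 < g_t < g_{t+1} and R, S ≥ 0. Then there exists a constant C (depending only on d, δ, g_t, g_{t+1}, f_t, f_{t+1}, R, S) such that for all x_t, x_{t+1}, s ∈ ℝ^d with ‖x_t‖ ≤ R, ‖x_{t+1}‖ ≤ R and ‖s‖ ≤ S, one has log N(x_{t+1}; x_t + f_t·δ·x_t, g_t²·δ·I) − log N(x_t; x_{t+1} − (f_{t+1}·x_{t+1} − g_{t+1}²·s)·δ, g_{t+1}²·δ·I) ≤ C. Explicitly, one may take C = d·log(g_{t+1}/g_t) + B²/(2 g_{t+1}² δ) + (g_{t+1}² δ)⁻²·B²/(2((g_t² δ)⁻¹ −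 (g_{t+1}² δ)⁻¹)) with B = δ·(|f_t|·R + |f_{t+1}|·R + g_{t+1}²·S). -/
open Real MeasureTheory

lemma log_gaussDensity (d : ℕ) {v : ℝ} (hv : 0 < v) (m x : EuclideanSpace ℝ (Fin d)) :
    Real.log (gaussDensity d v m x) = -(d / 2) * Real.log (2 * π * v) - ‖x - m‖ ^ 2 / (2 * v) := by
  unfold gaussDensity
  rw [Real.log_mul (by positivity) (Real.exp_ne_zero _), Real.log_rpow (by positivity),
    Real.log_exp]
  ring

lemma log_gaussDensity_sub_log_gaussDensity (d : ℕ) {v₁ v₂ : ℝ} (hv₁ : 0 < v₁) (hv₂ : 0 < v₂)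
    (m₁ x₁ m₂ x₂ : EuclideanSpace ℝ (Fin d)) :
    Real.log (gaussDensity d v₁ m₁ x₁) - Real.log (gaussDensity d v₂ m₂ x₂) =
      d / 2 * Real.log (v₂ / v₁) + (‖x₂ - m₂‖ ^ 2 / (2 * v₂) - ‖x₁ - m₁‖ ^ 2 / (2 * v₁)) := by
  rw [log_gaussDensity d hv₁, log_gaussDensity d hv₂,
    Real.log_div hv₂.ne' hv₁.ne', Real.log_mul (by positivity) hv₁.ne',
    Real.log_mul (by positivity) hv₂.ne']
  ring

lemma add_sq_div_sub_sq_div_le {v₁ v₂ : ℝ} (hv₁ : 0 < v₁) (hv₁₂ : v₁ < v₂) (A B : ℝ) :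
    (A + B) ^ 2 / (2 * v₂) - A ^ 2 / (2 * v₁) ≤ B ^ 2 / (2 * (v₂ - v₁)) := by
  have hgap : 0 < v₂ - v₁ := sub_pos.mpr hv₁₂
  have hv₂ : 0 < v₂ := hv₁.trans hv₁₂
  have hsq : B ^ 2 / (2 * (v₂ - v₁)) - ((A + B) ^ 2 / (2 * v₂) - A ^ 2 / (2 * v₁)) =
      ((v₂ - v₁) * A - v₁ * B) ^ 2 / (2 * v₁ * v₂ * (v₂ - v₁)) := by
    field_simp
    ring
  have : 0 ≤ ((v₂ - v₁) * A - v₁ * B) ^ 2 / (2 * v₁ * v₂ * (v₂ - v₁)) := by positivity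
  linarith

lemma norm_sq_div_sub_norm_sq_div_le {E : Type*} [SeminormedAddCommGroup E] {v₁ v₂ : ℝ}
    (hv₁ : 0 < v₁) (hv₁₂ : v₁ < v₂) (x y : E) :
    ‖y‖ ^ 2 / (2 * v₂) - ‖x‖ ^ 2 / (2 * v₁) ≤ ‖x + y‖ ^ 2 / (2 * (v₂ - v₁)) := by
  have hy : ‖y‖ ≤ ‖x‖ + ‖x + y‖ := (norm_le_add_norm_add' x y).trans_eq (add_comm _ _)
  have : ‖y‖ ^ 2 ≤ (‖x‖ + ‖x + y‖) ^ 2 := pow_le_pow_left₀ (norm_nonneg y) hy 2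
  calc ‖y‖ ^ 2 / (2 * v₂) - ‖x‖ ^ 2 / (2 * v₁)
      ≤ (‖x‖ + ‖x + y‖) ^ 2 / (2 * v₂) - ‖x‖ ^ 2 / (2 * v₁) := by
        gcongr; linarith
    _ ≤ ‖x + y‖ ^ 2 / (2 * (v₂ - v₁)) := add_sq_div_sub_sq_div_le hv₁ hv₁₂ _ _

lemma norm_drift_mismatch_le {E : Type*} [SeminormedAddCommGroup E] [NormedSpace ℝ E]
    {δ : ℝ} (hδ : 0 ≤ δ) (a b c R S : ℝ) {x y s : E} (hx : ‖x‖ ≤ R) (hy : ‖y‖ ≤ R)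
    (hs : ‖s‖ ≤ S) :
    ‖(y - (x + (a * δ) • x)) + (x - (y - δ • (b • y - c ^ 2 • s)))‖ ≤
      δ * (|a| * R + |b| * R + c ^ 2 * S) := by
  have hsplit : (y - (x + (a * δ) • x)) + (x - (y - δ • (b • y - c ^ 2 • s))) =
      δ • (b • y - c ^ 2 • s - a • x) := by
    module
  rw [hsplit, norm_smul, Real.norm_of_nonneg hδ]
  gcongr
  calc ‖b • y - c ^ 2 • s - a • x‖ ≤ ‖a • x‖ + ‖b • y‖ + ‖c ^ 2 • s‖ := by
        grw [norm_sub_le, norm_sub_le]; linarith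
    _ ≤ |a| * R + |b| * R + c ^ 2 * S := by
        simp only [norm_smul, Real.norm_eq_abs, abs_pow, sq_abs]
        gcongr

theorem log_ratio_forward_proposal_bound_general (d : ℕ) (δ : ℝ) (hδ : 0 < δ)
    (gt gt1 ft ft1 R S : ℝ) (hgt : 0 < gt) (hgg : gt < gt1) :
    ∀ xt xt1 s : EuclideanSpace ℝ (Fin d), ‖xt‖ ≤ R → ‖xt1‖ ≤ R → ‖s‖ ≤ S →
      Real.log (gaussDensity d (gt ^ 2 * δ) (xt + (ft * δ) • xt) xt1) -
        Real.log (gaussDensity d (gt1 ^ 2 * δ)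
          (xt1 - δ • (ft1 • xt1 - (gt1 ^ 2) • s)) xt) ≤
      d * Real.log (gt1 / gt) +
        (δ * (|ft| * R + |ft1| * R + gt1 ^ 2 * S)) ^ 2 / (2 * (gt1 ^ 2 * δ)) +
        ((gt1 ^ 2 * δ) ^ 2)⁻¹ * (δ * (|ft| * R + |ft1| * R + gt1 ^ 2 * S)) ^ 2 /
          (2 * ((gt ^ 2 * δ)⁻¹ - (gt1 ^ 2 * δ)⁻¹)) := by
  intro xt xt1 s hxt hxt1 hs
  set B := δ * (|ft| * R + |ft1| * R + gt1 ^ 2 * S)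
  have hv₁ : 0 < gt ^ 2 * δ := by positivity
  have hv₁₂ : gt ^ 2 * δ < gt1 ^ 2 * δ := by gcongr
  have hlog : (d : ℝ) / 2 * Real.log (gt1 ^ 2 * δ / (gt ^ 2 * δ)) = d * Real.log (gt1 / gt) := by
    rw [mul_div_mul_right _ _ hδ.ne', ← div_pow, Real.log_pow]
    push_cast
    ring
  set v₁ := gt ^ 2 * δ
  set v₂ := gt1 ^ 2 * δ
  have hv₂ : 0 < v₂ := hv₁.trans hv₁₂
  have hconst : B ^ 2 / (2 * (v₂ - v₁)) =
      B ^ 2 / (2 * v₂) + (v₂ ^ 2)⁻¹ * B ^ 2 / (2 * (v₁⁻¹ - v₂⁻¹)) := by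
    have : v₂ - v₁ ≠ 0 := (sub_pos.mpr hv₁₂).ne'
    rw [inv_sub_inv hv₁.ne' hv₂.ne']
    field_simp
    ring
  rw [log_gaussDensity_sub_log_gaussDensity d hv₁ hv₂, hlog, add_assoc, ← hconst]
  gcongr
  refine (norm_sq_div_sub_norm_sq_div_le hv₁ hv₁₂ _ _).trans ?_
  gcongr
  exact norm_drift_mismatch_le hδ.le ft ft1 gt1 R S hxt hxt1 hs

/-- On a compact state space (`‖x_t‖, ‖x_{t+1}‖ ≤ R`) and with a bounded score estimate
(`‖s‖ ≤ S`), if the diffusion coefficient increases (`0 < g_t < g_{t+1}`), then the log-ratio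
of the Euler–Maruyama forward noising kernel
`N(x_{t+1}; x_t + f_t·δ·x_t, g_t²·δ·I)` over the reverse-diffusion proposal kernel
`N(x_t; x_{t+1} − (f_{t+1}·x_{t+1} − g_{t+1}²·s)·δ, g_{t+1}²·δ·I)` is bounded above by the
explicit constant
`C = d·log(g_{t+1}/g_t) + B²/(2 g_{t+1}² δ) + (g_{t+1}² δ)⁻²·B²/(2((g_t² δ)⁻¹ − (g_{t+1}² δ)⁻¹))`
with `B = δ·(|f_t|·R + |f_{t+1}|·R + g_{t+1}²·S)`. -/
theorem log_ratio_forward_proposal_bound (d : ℕ) (hd : 0 < d) (δ : ℝ) (hδ : 0 < δ)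
    (gt gt1 ft ft1 R S : ℝ) (hgt : 0 < gt) (hgg : gt < gt1) (hR : 0 ≤ R) (hS : 0 ≤ S) :
    ∀ xt xt1 s : EuclideanSpace ℝ (Fin d), ‖xt‖ ≤ R → ‖xt1‖ ≤ R → ‖s‖ ≤ S →
      Real.log (gaussDensity d (gt ^ 2 * δ) (xt + (ft * δ) • xt) xt1) -
        Real.log (gaussDensity d (gt1 ^ 2 * δ)
          (xt1 - δ • (ft1 • xt1 - (gt1 ^ 2) • s)) xt) ≤
      d * Real.log (gt1 / gt) +
        (δ * (|ft| * R + |ft1| * R + gt1 ^ 2 * S)) ^ 2 / (2 * (gt1 ^ 2 * δ)) +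
        ((gt1 ^ 2 * δ) ^ 2)⁻¹ * (δ * (|ft| * R + |ft1| * R + gt1 ^ 2 * S)) ^ 2 /
          (2 * ((gt ^ 2 * δ)⁻¹ - (gt1 ^ 2 * δ)⁻¹)) :=
  log_ratio_forward_proposal_bound_general d δ hδ gt gt1 ft ft1 R S hgt hgg
end

section
/- Fix d, T ∈ ℕ with T ≥ 1 and a measurable space U. Let π̃ : ℝ^d → [0,∞) be measurable and Lebesgue-integrable with Z := ∫ π̃(x) dx. For t = 1, …, T let k_t : ℝ^d × ℝ^d → [0,∞) be measurable with ∫ k_t(x, y) dy = 1 for every x. Let ρ : ℝ^d → (0,∞) be a measurable probability density, let r_t (t = 0, …, T) be Markov (probability) kernels from ℝ^d to U, and for t = 0, …, T−1 let q_t : ℝ^d × U × ℝ^d → (0,∞) be measurable with ∫ q_t(x_{t+1}, u_{t+1}, x_t) dx_t = 1 for all (x_{t+1}, u_{t+1}). Let p̂_t : ℝ^d × U → (0,∞) for t = 1, …, T be measurable, and set p̂_0(x, u) := π̃(x). Define the proposal law of (x_T, u_T, x_{T−1}, u_{T−1}, …, x_0, u_0) by sampling x_T with density ρ, u_t ∼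 r_t(x_t, ·), and x_t with density q_t(x_{t+1}, u_{t+1}, ·), and define the weights w_T := p̂_T(x_T, u_T)/ρ(x_T) and, for t = 0, …, T−1, w_t := p̂_t(x_t, u_t)·k_{t+1}(x_t, x_{t+1}) / (p̂_{t+1}(x_{t+1}, u_{t+1})·q_t(x_{t+1}, u_{t+1}, x_t)). Then the expectation of the product of all weights under the proposal law equals Z: E[∏_{t=0}^{T} w_t] = Z. -/
open MeasureTheory ProbabilityTheory ENNReal

/-- The conditional expectation, under the reverse-diffusion proposal, of the product of the
remaining RDSMC weights `w_{t} ⋯ w_0`, given the state/auxiliary pair `(x_{t+1}, u_{t+1})`.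

`rdsmcRest k q r phat (t+1) x₁ u₁` integrates, over `x_t ∼ q_t(x_{t+1}, u_{t+1}, ·)` (density
w.r.t. Lebesgue measure) and `u_t ∼ r_t(x_t, ·)`, the weight
`w_t = phat_t(x_t,u_t)·k_{t+1}(x_t,x_{t+1}) / (phat_{t+1}(x_{t+1},u_{t+1})·q_t(x_{t+1},u_{t+1},x_t))`
times the expectation of the weights below step `t`. -/
noncomputable def rdsmcRest {d : ℕ} {U : Type*} [MeasurableSpace U]
    (k : ℕ → EuclideanSpace ℝ (Fin d) → EuclideanSpace ℝ (Fin d) → ℝ)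
    (q : ℕ → EuclideanSpace ℝ (Fin d) → U → EuclideanSpace ℝ (Fin d) → ℝ)
    (r : ℕ → Kernel (EuclideanSpace ℝ (Fin d)) U)
    (phat : ℕ → EuclideanSpace ℝ (Fin d) → U → ℝ) :
    ℕ → EuclideanSpace ℝ (Fin d) → U → ℝ≥0∞
  | 0, _, _ => 1
  | (t + 1), x₁, u₁ =>
      ∫⁻ x₀, ENNReal.ofReal (q t x₁ u₁ x₀) *
        ∫⁻ u₀, ENNReal.ofReal (phat t x₀ u₀ * k (t + 1) x₀ x₁ /
            (phat (t + 1) x₁ u₁ * q t x₁ u₁ x₀)) * rdsmcRest k q r phat t x₀ u₀ ∂(r t x₀)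

noncomputable def rdF {d : ℕ} (πt : EuclideanSpace ℝ (Fin d) → ℝ)
    (k : ℕ → EuclideanSpace ℝ (Fin d) → EuclideanSpace ℝ (Fin d) → ℝ) :
    ℕ → EuclideanSpace ℝ (Fin d) → ℝ≥0∞
  | 0, x => ENNReal.ofReal (πt x)
  | (t + 1), x => ∫⁻ y, rdF πt k t y * ENNReal.ofReal (k (t + 1) y x)

lemma rdF_meas {d : ℕ} (πt : EuclideanSpace ℝ (Fin d) → ℝ)
    (k : ℕ → EuclideanSpace ℝ (Fin d) → EuclideanSpace ℝ (Fin d) → ℝ)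
    (hπt_meas : Measurable πt)
    (hk_meas : ∀ t, Measurable (Function.uncurry (k t))) :
    ∀ t, Measurable (rdF πt k t) := by
  intro t
  induction t with
  | zero => exact hπt_meas.ennreal_ofReal
  | succ t ih =>
      have : Measurable fun p : EuclideanSpace ℝ (Fin d) × EuclideanSpace ℝ (Fin d) =>
          rdF πt k t p.2 * ENNReal.ofReal (k (t + 1) p.2 p.1) :=
        (ih.comp measurable_snd).mul
          (((hk_meas (t + 1)).comp measurable_swap).ennreal_ofReal)
      exact this.lintegral_prod_right'

/-- **Unbiasedness of the single-particle RDSMC normalization-constant estimator.**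
With `π̃` a nonnegative integrable unnormalized target with `Z = ∫ π̃`, forward transition
densities `k_t` (`t = 1, …, T`), reference density `ρ`, auxiliary Markov kernels `r_t`,
proposal transition densities `q_t` (`t = 0, …, T−1`), and positive marginal estimates `phat_t`
(`t = 1, …, T`) with `phat_0 = π̃`, the expectation under the proposal law of the product of all
the weights `w_T = phat_T(x_T,u_T)/ρ(x_T)` and
`w_t = phat_t(x_t,u_t)·k_{t+1}(x_t,x_{t+1})/(phat_{t+1}(x_{t+1},u_{t+1})·q_t(x_{t+1},u_{t+1},x_t))`
equals `Z`. -/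
theorem rdsmc_normalization_unbiased {d : ℕ} {U : Type*} [MeasurableSpace U]
    (T : ℕ) (hT : 1 ≤ T)
    (πt : EuclideanSpace ℝ (Fin d) → ℝ)
    (hπt_nonneg : ∀ x, 0 ≤ πt x) (hπt_meas : Measurable πt)
    (hπt_int : Integrable πt)
    (k : ℕ → EuclideanSpace ℝ (Fin d) → EuclideanSpace ℝ (Fin d) → ℝ)
    (hk_nonneg : ∀ t x y, 0 ≤ k t x y)
    (hk_meas : ∀ t, Measurable (Function.uncurry (k t)))
    (hk_norm : ∀ t, 1 ≤ t → t ≤ T → ∀ x, ∫⁻ y, ENNReal.ofReal (k t x y) = 1)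
    (ρ : EuclideanSpace ℝ (Fin d) → ℝ)
    (hρ_pos : ∀ x, 0 < ρ x) (hρ_meas : Measurable ρ)
    (hρ_norm : ∫⁻ x, ENNReal.ofReal (ρ x) = 1)
    (r : ℕ → Kernel (EuclideanSpace ℝ (Fin d)) U) (hr : ∀ t, IsMarkovKernel (r t))
    (q : ℕ → EuclideanSpace ℝ (Fin d) → U → EuclideanSpace ℝ (Fin d) → ℝ)
    (hq_pos : ∀ t x u y, 0 < q t x u y)
    (hq_meas : ∀ t, Measurable
      (fun p : EuclideanSpace ℝ (Fin d) × U × EuclideanSpace ℝ (Fin d) => q t p.1 p.2.1 p.2.2))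
    (hq_norm : ∀ t, t < T → ∀ x u, ∫⁻ y, ENNReal.ofReal (q t x u y) = 1)
    (phat : ℕ → EuclideanSpace ℝ (Fin d) → U → ℝ)
    (hphat_pos : ∀ t, 1 ≤ t → t ≤ T → ∀ x u, 0 < phat t x u)
    (hphat_meas : ∀ t, Measurable (fun p : EuclideanSpace ℝ (Fin d) × U => phat t p.1 p.2))
    (hphat0 : ∀ x u, phat 0 x u = πt x) :
    (∫⁻ xT, ENNReal.ofReal (ρ xT) *
        ∫⁻ uT, ENNReal.ofReal (phat T xT uT / ρ xT) * rdsmcRest k q r phat T xT uT ∂(r T xT)) =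
      ENNReal.ofReal (∫ x, πt x) := by
  have hphat_nonneg : ∀ t, t ≤ T → ∀ x u, 0 ≤ phat t x u := by
    intro t ht x u
    rcases Nat.eq_zero_or_pos t with h | h
    · subst h; rw [hphat0]; exact hπt_nonneg x
    · exact (hphat_pos t h ht x u).le
  -- key identity
  have key : ∀ t, t ≤ T → ∀ x u,
      ENNReal.ofReal (phat t x u) * rdsmcRest k q r phat t x u = rdF πt k t x := by
    intro t
    induction t with
    | zero =>
        intro _ x u
        simp [rdsmcRest, rdF, hphat0]
    | succ t ih =>
        intro h x₁ u₁
        haveI := hr t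
        have ht : t ≤ T := Nat.le_of_succ_le h
        set C := ENNReal.ofReal (phat (t + 1) x₁ u₁) with hCdef
        have hCpos : 0 < phat (t + 1) x₁ u₁ :=
          hphat_pos (t + 1) (Nat.succ_le_succ (Nat.zero_le t)) h x₁ u₁
        have hC0 : C ≠ 0 := by
          simp only [hCdef, ne_eq, ENNReal.ofReal_eq_zero, not_le]; exact hCpos
        have hCt : C ≠ ∞ := ENNReal.ofReal_ne_top
        have inner : ∀ x₀,
            (∫⁻ u₀, ENNReal.ofReal (phat t x₀ u₀ * k (t + 1) x₀ x₁ /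
                (phat (t + 1) x₁ u₁ * q t x₁ u₁ x₀)) *
              rdsmcRest k q r phat t x₀ u₀ ∂(r t x₀)) =
            (C * ENNReal.ofReal (q t x₁ u₁ x₀))⁻¹ *
              (ENNReal.ofReal (k (t + 1) x₀ x₁) * rdF πt k t x₀) := by
          intro x₀
          have hrw : ∀ u₀, ENNReal.ofReal (phat t x₀ u₀ * k (t + 1) x₀ x₁ /
                (phat (t + 1) x₁ u₁ * q t x₁ u₁ x₀)) *
              rdsmcRest k q r phat t x₀ u₀ =
              (C * ENNReal.ofReal (q t x₁ u₁ x₀))⁻¹ *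
                (ENNReal.ofReal (k (t + 1) x₀ x₁) * rdF πt k t x₀) := by
            intro u₀
            have hden : (0 : ℝ) < phat (t + 1) x₁ u₁ * q t x₁ u₁ x₀ :=
              mul_pos hCpos (hq_pos t x₁ u₁ x₀)
            rw [ENNReal.ofReal_div_of_pos hden, div_eq_mul_inv,
              ENNReal.ofReal_mul (hphat_nonneg t ht x₀ u₀),
              ENNReal.ofReal_mul hCpos.le]
            rw [show ENNReal.ofReal (phat t x₀ u₀) * ENNReal.ofReal (k (t + 1) x₀ x₁) *
                (ENNReal.ofReal (phat (t + 1) x₁ u₁) * ENNReal.ofReal (q t x₁ u₁ x₀))⁻¹ *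
                rdsmcRest k q r phat t x₀ u₀ =
                (C * ENNReal.ofReal (q t x₁ u₁ x₀))⁻¹ *
                  (ENNReal.ofReal (k (t + 1) x₀ x₁) *
                    (ENNReal.ofReal (phat t x₀ u₀) * rdsmcRest k q r phat t x₀ u₀)) by
              rw [hCdef]; ring]
            rw [ih ht x₀ u₀]
          rw [lintegral_congr hrw, lintegral_const, measure_univ, mul_one]
        have hq0 : ∀ x₀, ENNReal.ofReal (q t x₁ u₁ x₀) ≠ 0 := by
          intro x₀; simp only [ne_eq, ENNReal.ofReal_eq_zero, not_le]; exact hq_pos t x₁ u₁ x₀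
        have step : rdsmcRest k q r phat (t + 1) x₁ u₁ = C⁻¹ * rdF πt k (t + 1) x₁ := by
          show (∫⁻ x₀, ENNReal.ofReal (q t x₁ u₁ x₀) *
              ∫⁻ u₀, ENNReal.ofReal (phat t x₀ u₀ * k (t + 1) x₀ x₁ /
                  (phat (t + 1) x₁ u₁ * q t x₁ u₁ x₀)) *
                rdsmcRest k q r phat t x₀ u₀ ∂(r t x₀)) = _
          have hpt : ∀ x₀, ENNReal.ofReal (q t x₁ u₁ x₀) *
              ((C * ENNReal.ofReal (q t x₁ u₁ x₀))⁻¹ *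
                (ENNReal.ofReal (k (t + 1) x₀ x₁) * rdF πt k t x₀)) =
              C⁻¹ * (rdF πt k t x₀ * ENNReal.ofReal (k (t + 1) x₀ x₁)) := by
            intro x₀
            rw [ENNReal.mul_inv (Or.inl hC0) (Or.inl hCt)]
            rw [show ENNReal.ofReal (q t x₁ u₁ x₀) *
                (C⁻¹ * (ENNReal.ofReal (q t x₁ u₁ x₀))⁻¹ *
                  (ENNReal.ofReal (k (t + 1) x₀ x₁) * rdF πt k t x₀)) =
                (ENNReal.ofReal (q t x₁ u₁ x₀) * (ENNReal.ofReal (q t x₁ u₁ x₀))⁻¹) *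
                  (C⁻¹ * (rdF πt k t x₀ * ENNReal.ofReal (k (t + 1) x₀ x₁))) by ring]
            rw [ENNReal.mul_inv_cancel (hq0 x₀) ENNReal.ofReal_ne_top, one_mul]
          calc (∫⁻ x₀, ENNReal.ofReal (q t x₁ u₁ x₀) *
                ∫⁻ u₀, ENNReal.ofReal (phat t x₀ u₀ * k (t + 1) x₀ x₁ /
                    (phat (t + 1) x₁ u₁ * q t x₁ u₁ x₀)) *
                  rdsmcRest k q r phat t x₀ u₀ ∂(r t x₀))
              = ∫⁻ x₀, C⁻¹ * (rdF πt k t x₀ * ENNReal.ofReal (k (t + 1) x₀ x₁)) := by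
                refine lintegral_congr fun x₀ => ?_
                rw [inner x₀, hpt x₀]
            _ = C⁻¹ * ∫⁻ x₀, rdF πt k t x₀ * ENNReal.ofReal (k (t + 1) x₀ x₁) :=
                lintegral_const_mul' _ _ (ENNReal.inv_ne_top.mpr hC0)
            _ = C⁻¹ * rdF πt k (t + 1) x₁ := rfl
        rw [step, ← mul_assoc, ENNReal.mul_inv_cancel hC0 hCt, one_mul]
  -- lintegral of rdF
  have hint : ∀ t, t ≤ T → (∫⁻ x, rdF πt k t x) = ENNReal.ofReal (∫ x, πt x) := by
    intro t
    induction t with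
    | zero =>
        intro _
        exact (ofReal_integral_eq_lintegral_ofReal hπt_int
          (Filter.Eventually.of_forall hπt_nonneg)).symm
    | succ t ih =>
        intro h
        have ht : t ≤ T := Nat.le_of_succ_le h
        have hswap : (∫⁻ x, rdF πt k (t + 1) x) =
            ∫⁻ y, ∫⁻ x, rdF πt k t y * ENNReal.ofReal (k (t + 1) y x) := by
          show (∫⁻ x, ∫⁻ y, rdF πt k t y * ENNReal.ofReal (k (t + 1) y x)) = _
          refine lintegral_lintegral_swap ?_
          exact ((rdF_meas πt k hπt_meas hk_meas t).comp measurable_snd).mul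
            (((hk_meas (t + 1)).comp measurable_swap).ennreal_ofReal) |>.aemeasurable
        rw [hswap]
        have : ∀ y, (∫⁻ x, rdF πt k t y * ENNReal.ofReal (k (t + 1) y x)) = rdF πt k t y := by
          intro y
          have hm : Measurable fun x => ENNReal.ofReal (k (t + 1) y x) :=
            ((hk_meas (t + 1)).comp measurable_prodMk_left).ennreal_ofReal
          rw [lintegral_const_mul _ hm,
            hk_norm (t + 1) (Nat.succ_le_succ (Nat.zero_le t)) h y, mul_one]
        rw [lintegral_congr this]
        exact ih ht
  -- conclude
  haveI := hr T
  have hmain : ∀ xT, ENNReal.ofReal (ρ xT) *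
      (∫⁻ uT, ENNReal.ofReal (phat T xT uT / ρ xT) *
        rdsmcRest k q r phat T xT uT ∂(r T xT)) = rdF πt k T xT := by
    intro xT
    have hρp := hρ_pos xT
    have hρ0 : ENNReal.ofReal (ρ xT) ≠ 0 := by
      simp only [ne_eq, ENNReal.ofReal_eq_zero, not_le]; exact hρp
    have hrw : ∀ uT, ENNReal.ofReal (phat T xT uT / ρ xT) *
        rdsmcRest k q r phat T xT uT =
        (ENNReal.ofReal (ρ xT))⁻¹ * rdF πt k T xT := by
      intro uT
      rw [ENNReal.ofReal_div_of_pos hρp, div_eq_mul_inv,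
        show ENNReal.ofReal (phat T xT uT) * (ENNReal.ofReal (ρ xT))⁻¹ *
            rdsmcRest k q r phat T xT uT =
          (ENNReal.ofReal (ρ xT))⁻¹ *
            (ENNReal.ofReal (phat T xT uT) * rdsmcRest k q r phat T xT uT) by ring,
        key T le_rfl xT uT]
    rw [lintegral_congr hrw, lintegral_const, measure_univ, mul_one, ← mul_assoc,
      ENNReal.mul_inv_cancel hρ0 ENNReal.ofReal_ne_top, one_mul]
  rw [lintegral_congr hmain]
  exact hint T le_rfl
end

section
/- Let (E, 𝓔) be a measurable space equipped with a σ-finite measure λ, let K ≥ 1, and let γ_0, γ_1, …, γ_K : E → (0,∞) be measurable with Z_k := ∫ γ_k dλ ∈ (0,∞) for each k. For k = 1, …, K−1 let M_k be a Markov (probability) kernel on E that leaves the probability measure μ_k with density γ_k/Z_k with respect to λ invariant (i.e., the pushforward of μ_k through M_k equals μ_k). Let (X_0, X_1, …, X_{K−1}) be the Markov chain with X_0 distributed as μ_0 (density γ_0/Z_0) and X_k ∼ M_k(X_{k−1}, ·) for k = 1, …, K−1. Then the annealed importance sampling weight W := ∏_{k=0}^{K−1} γ_{k+1}(X_k)/γ_k(X_k)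 satisfies E[W] = Z_K / Z_0. -/
open MeasureTheory ProbabilityTheory ENNReal

/-!
Induct backwards over the number `n` of remaining weight factors, starting the chain at
`μ_j = Z_j⁻¹ γ_j ν`. The first factor `γ_{j+1}/γ_j` turns `μ_j` into
`(Z_{j+1}/Z_j) μ_{j+1}`, and since `μ_{j+1}` is `M_{j+1}`-invariant the transition that follows
can be dropped, so the expectation telescopes to `Z_{j+n}/Z_j`.
-/

/-- `aisExp M w n j x` is the conditional expectation, along the Markov chain with
transition kernels `M` (`X_{j+1} ∼ M_{j+1}(X_j, ·)`), of the product of the remaining `n`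
annealed-importance-sampling weight factors `w_j(X_j)·w_{j+1}(X_{j+1})⋯w_{j+n-1}(X_{j+n-1})`,
given `X_j = x`. -/
noncomputable def aisExp {E : Type*} [MeasurableSpace E]
    (M : ℕ → Kernel E E) (w : ℕ → E → ℝ≥0∞) : ℕ → ℕ → E → ℝ≥0∞
  | 0, _, _ => 1
  | 1, j, x => w j x
  | (n + 2), j, x => w j x * ∫⁻ y, aisExp M w (n + 1) (j + 1) y ∂(M (j + 1) x)

section

variable {E : Type*} [MeasurableSpace E]

theorem measurable_aisExp (M : ℕ → Kernel E E) (w : ℕ → E → ℝ≥0∞) :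
    ∀ n j, (∀ k, j ≤ k → k < j + n → Measurable (w k)) → Measurable (aisExp M w n j)
  | 0, _, _ => measurable_const
  | 1, j, hw => hw j le_rfl (by omega)
  | n + 2, j, hw =>
    have hrest : Measurable (aisExp M w (n + 1) (j + 1)) :=
      measurable_aisExp M w (n + 1) (j + 1) fun k _ _ => hw k (by omega) (by omega)
    (hw j le_rfl (by omega)).mul hrest.lintegral_kernel

noncomputable def normalizedWithDensity (ν : Measure E) (f : E → ℝ) (Z : ℝ≥0∞) :
    Measure E :=
  Z⁻¹ • ν.withDensity fun x => ENNReal.ofReal (f x)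

variable {ν : Measure E} {f g : E → ℝ} {Z : ℝ≥0∞}

theorem isProbabilityMeasure_normalizedWithDensity (hZ : Z = ∫⁻ x, ENNReal.ofReal (f x) ∂ν)
    (hZ_pos : 0 < Z) (hZ_fin : Z < ⊤) : IsProbabilityMeasure (normalizedWithDensity ν f Z) := by
  constructor
  rw [normalizedWithDensity, Measure.smul_apply, withDensity_apply _ MeasurableSet.univ,
    Measure.restrict_univ, ← hZ, smul_eq_mul, ENNReal.inv_mul_cancel hZ_pos.ne' hZ_fin.ne]

theorem withDensity_ofReal_eq_smul_normalizedWithDensity (hZ_pos : 0 < Z) (hZ_fin : Z < ⊤) :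
    (ν.withDensity fun x => ENNReal.ofReal (f x)) = Z • normalizedWithDensity ν f Z := by
  rw [normalizedWithDensity, smul_smul, ENNReal.mul_inv_cancel hZ_pos.ne' hZ_fin.ne, one_smul]

theorem lintegral_withDensity_ofReal_div_mul (hf : Measurable f) (hg : Measurable g)
    (hg_pos : ∀ x, 0 < g x) {φ : E → ℝ≥0∞} (hφ : Measurable φ) :
    ∫⁻ x, ENNReal.ofReal (f x / g x) * φ x ∂ν.withDensity (fun x => ENNReal.ofReal (g x)) =
      ∫⁻ x, φ x ∂ν.withDensity (fun x => ENNReal.ofReal (f x)) := by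
  have hratio : Measurable fun x => ENNReal.ofReal (f x / g x) := (hf.div hg).ennreal_ofReal
  rw [lintegral_withDensity_eq_lintegral_mul _ hg.ennreal_ofReal
      (g := fun x => ENNReal.ofReal (f x / g x) * φ x) (hratio.mul hφ),
    lintegral_withDensity_eq_lintegral_mul _ hf.ennreal_ofReal hφ]
  congr 1 with x
  simp only [Pi.mul_apply, ← mul_assoc, ← ENNReal.ofReal_mul (hg_pos x).le,
    mul_div_cancel₀ _ (hg_pos x).ne']

theorem lintegral_ofReal_div_mul_normalizedWithDensity {Z' : ℝ≥0∞} (hf : Measurable f)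
    (hg : Measurable g) (hg_pos : ∀ x, 0 < g x) (hZ'_pos : 0 < Z') (hZ'_fin : Z' < ⊤)
    {φ : E → ℝ≥0∞} (hφ : Measurable φ) :
    ∫⁻ x, ENNReal.ofReal (f x / g x) * φ x ∂normalizedWithDensity ν g Z =
      Z' / Z * ∫⁻ x, φ x ∂normalizedWithDensity ν f Z' := by
  rw [normalizedWithDensity, lintegral_smul_measure,
    lintegral_withDensity_ofReal_div_mul hf hg hg_pos hφ,
    withDensity_ofReal_eq_smul_normalizedWithDensity hZ'_pos hZ'_fin, lintegral_smul_measure,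
    smul_eq_mul, smul_eq_mul, div_eq_mul_inv]
  ring

end

section

variable {E : Type*} [MeasurableSpace E] (ν : Measure E) (K : ℕ) (γ : ℕ → E → ℝ)
  (Z : ℕ → ℝ≥0∞) (M : ℕ → Kernel E E)

theorem lintegral_aisExp (hγ_pos : ∀ k, k ≤ K → ∀ x, 0 < γ k x)
    (hγ_meas : ∀ k, k ≤ K → Measurable (γ k))
    (hZ : ∀ k, k ≤ K → Z k = ∫⁻ x, ENNReal.ofReal (γ k x) ∂ν)
    (hZ_pos : ∀ k, k ≤ K → 0 < Z k) (hZ_fin : ∀ k, k ≤ K → Z k < ⊤)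
    (hinv : ∀ k, 1 ≤ k → k ≤ K - 1 →
      (normalizedWithDensity ν (γ k) (Z k)).bind (M k) = normalizedWithDensity ν (γ k) (Z k)) :
    ∀ n j, j + n ≤ K →
      ∫⁻ x, aisExp M (fun k x => ENNReal.ofReal (γ (k + 1) x / γ k x)) n j x
        ∂normalizedWithDensity ν (γ j) (Z j) = Z (j + n) / Z j
  | 0, j, hjK => by
    have := isProbabilityMeasure_normalizedWithDensity (hZ j hjK) (hZ_pos j hjK) (hZ_fin j hjK)
    simp [aisExp, ENNReal.div_self (hZ_pos j hjK).ne' (hZ_fin j hjK).ne]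
  | 1, j, hjK => by
    have := isProbabilityMeasure_normalizedWithDensity (hZ (j + 1) hjK) (hZ_pos (j + 1) hjK)
      (hZ_fin (j + 1) hjK)
    simpa [aisExp] using lintegral_ofReal_div_mul_normalizedWithDensity (hγ_meas (j + 1) hjK)
      (hγ_meas j (by omega)) (hγ_pos j (by omega)) (hZ_pos (j + 1) hjK) (hZ_fin (j + 1) hjK)
      (ν := ν) (Z := Z j) (φ := 1) measurable_const
  | n + 2, j, hjK => by
    set w : ℕ → E → ℝ≥0∞ := fun k x => ENNReal.ofReal (γ (k + 1) x / γ k x)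
    have hrest : Measurable (aisExp M w (n + 1) (j + 1)) :=
      measurable_aisExp M w (n + 1) (j + 1) fun k _ hk =>
        ((hγ_meas (k + 1) (by omega)).div (hγ_meas k (by omega))).ennreal_ofReal
    calc ∫⁻ x, aisExp M w (n + 2) j x ∂normalizedWithDensity ν (γ j) (Z j)
        = Z (j + 1) / Z j * ∫⁻ x, ∫⁻ y, aisExp M w (n + 1) (j + 1) y ∂M (j + 1) x
            ∂normalizedWithDensity ν (γ (j + 1)) (Z (j + 1)) :=
          lintegral_ofReal_div_mul_normalizedWithDensity (hγ_meas (j + 1) (by omega))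
            (hγ_meas j (by omega)) (hγ_pos j (by omega)) (hZ_pos (j + 1) (by omega))
            (hZ_fin (j + 1) (by omega)) hrest.lintegral_kernel
      _ = Z (j + 1) / Z j * ∫⁻ y, aisExp M w (n + 1) (j + 1) y
            ∂normalizedWithDensity ν (γ (j + 1)) (Z (j + 1)) := by
          rw [← Measure.lintegral_bind (M (j + 1)).aemeasurable hrest.aemeasurable,
            hinv (j + 1) (by omega) (by omega)]
      _ = Z (j + 1) / Z j * (Z (j + (n + 2)) / Z (j + 1)) := by
          rw [lintegral_aisExp hγ_pos hγ_meas hZ hZ_pos hZ_fin hinv (n + 1) (j + 1) (by omega),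
            show j + 1 + (n + 1) = j + (n + 2) by omega]
      _ = Z (j + (n + 2)) / Z j := by
          rw [div_eq_mul_inv (Z (j + 1)), mul_right_comm,
            ENNReal.mul_div_cancel (hZ_pos (j + 1) (by omega)).ne' (hZ_fin (j + 1) (by omega)).ne,
            div_eq_mul_inv]

end

theorem ais_weight_unbiased_general {E : Type*} [MeasurableSpace E]
    (ν : Measure E) (K : ℕ)
    (γ : ℕ → E → ℝ)
    (hγ_pos : ∀ k, k ≤ K → ∀ x, 0 < γ k x)
    (hγ_meas : ∀ k, k ≤ K → Measurable (γ k))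
    (Z : ℕ → ℝ≥0∞)
    (hZ : ∀ k, k ≤ K → Z k = ∫⁻ x, ENNReal.ofReal (γ k x) ∂ν)
    (hZ_pos : ∀ k, k ≤ K → 0 < Z k) (hZ_fin : ∀ k, k ≤ K → Z k < ⊤)
    (M : ℕ → Kernel E E)
    (hinv : ∀ k, 1 ≤ k → k ≤ K - 1 →
      Measure.bind ((Z k)⁻¹ • ν.withDensity fun x => ENNReal.ofReal (γ k x)) (M k) =
        (Z k)⁻¹ • ν.withDensity fun x => ENNReal.ofReal (γ k x)) :
    (∫⁻ x₀, aisExp M (fun k x => ENNReal.ofReal (γ (k + 1) x / γ k x)) K 0 x₀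
        ∂((Z 0)⁻¹ • ν.withDensity fun x => ENNReal.ofReal (γ 0 x))) =
      Z K / Z 0 := by
  have h := lintegral_aisExp ν K γ Z M hγ_pos hγ_meas hZ hZ_pos hZ_fin hinv K 0 (zero_add K).le
  rwa [zero_add] at h

/-- **Unbiasedness of annealed importance sampling.**
Let `γ_0, …, γ_K` be positive measurable unnormalized densities w.r.t. a σ-finite measure
`ν` with `Z_k = ∫ γ_k dν ∈ (0, ∞)`, and for `k = 1, …, K−1` let `M_k` be a Markov kernel
leaving the probability measure `μ_k = Z_k⁻¹·(γ_k dν)` invariant. Run the chain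
`X_0 ∼ μ_0`, `X_k ∼ M_k(X_{k−1}, ·)` for `k = 1, …, K−1`. Then the AIS weight
`W = ∏_{k=0}^{K−1} γ_{k+1}(X_k)/γ_k(X_k)` satisfies `E[W] = Z_K / Z_0`. -/
theorem ais_weight_unbiased {E : Type*} [MeasurableSpace E]
    (ν : Measure E) [SigmaFinite ν] (K : ℕ) (hK : 1 ≤ K)
    (γ : ℕ → E → ℝ)
    (hγ_pos : ∀ k, k ≤ K → ∀ x, 0 < γ k x)
    (hγ_meas : ∀ k, k ≤ K → Measurable (γ k))
    (Z : ℕ → ℝ≥0∞)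
    (hZ : ∀ k, k ≤ K → Z k = ∫⁻ x, ENNReal.ofReal (γ k x) ∂ν)
    (hZ_pos : ∀ k, k ≤ K → 0 < Z k) (hZ_fin : ∀ k, k ≤ K → Z k < ⊤)
    (M : ℕ → Kernel E E) (hM : ∀ k, 1 ≤ k → k ≤ K - 1 → IsMarkovKernel (M k))
    (hinv : ∀ k, 1 ≤ k → k ≤ K - 1 →
      Measure.bind ((Z k)⁻¹ • ν.withDensity fun x => ENNReal.ofReal (γ k x)) (M k) =
        (Z k)⁻¹ • ν.withDensity fun x => ENNReal.ofReal (γ k x)) :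
    (∫⁻ x₀, aisExp M (fun k x => ENNReal.ofReal (γ (k + 1) x / γ k x)) K 0 x₀
        ∂((Z 0)⁻¹ • ν.withDensity fun x => ENNReal.ofReal (γ 0 x))) =
      Z K / Z 0 :=
  ais_weight_unbiased_general ν K γ hγ_pos hγ_meas Z hZ hZ_pos hZ_fin M hinv
end
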